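/- For any finite simple graph G on n vertices containing at least one induced complete bipartite subgraph, τ(G) ≤ n − β(G) + 1, where β(G) is the maximum number of vertices in an induced subgraph of G that is a complete bipartite graph. -/

import Mathlib

/-!
Put one part on the induced complete bipartite subgraph `G[S]`. Every remaining edge has an
endpoint outside `S`, so the `n - |S|` vertices outside `S` form a vertex cover of the rest, and
a graph with a vertex cover `T` splits into `|T|` stars: peel off the star of one vertex of `T`
and recurse on the others.
-/

open Finset

def IsBipDecomp {V : Type*} [DecidableEq V] (G : SimpleGraph V)
    {k : ℕ} (A B : Fin k → Finset V) : Prop :=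
  (∀ i, Disjoint (A i) (B i)) ∧
  (∀ i, ∀ a ∈ A i, ∀ b ∈ B i, G.Adj a b) ∧
  ∀ e ∈ G.edgeSet, ∃! i : Fin k, e ∈ (A i ×ˢ B i).image fun p => s(p.1, p.2)

theorem SimpleGraph.sdiff_deleteIncidenceSet_adj {V : Type*} (G : SimpleGraph V) (t u v : V) :
    (G \ G.deleteIncidenceSet t).Adj u v ↔ (u = t ∧ G.Adj t v) ∨ (G.Adj t u ∧ v = t) := by
  rw [sdiff_adj, deleteIncidenceSet_adj]
  constructor
  · rintro ⟨huv, hne⟩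
    by_cases hu : u = t
    · exact .inl ⟨hu, hu ▸ huv⟩
    · obtain rfl : v = t := by tauto
      exact .inr ⟨huv.symm, rfl⟩
  · rintro (⟨rfl, huv⟩ | ⟨huv, rfl⟩)
    · exact ⟨huv, fun h => h.2.1 rfl⟩
    · exact ⟨huv.symm, fun h => h.2.2 rfl⟩

section

variable {V : Type*} [DecidableEq V]

theorem mk_mem_image_product_iff {A B : Finset V} {x y : V} :
    s(x, y) ∈ (A ×ˢ B).image (fun p => s(p.1, p.2)) ↔ (x ∈ A ∧ y ∈ B) ∨ (y ∈ A ∧ x ∈ B) := by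
  simp only [mem_image, mem_product, Prod.exists, Sym2.eq_iff]
  aesop

namespace IsBipDecomp

variable {G H : SimpleGraph V}

theorem mem_edgeSet {k : ℕ} {A B : Fin k → Finset V} (h : IsBipDecomp G A B) {i : Fin k}
    {e : Sym2 V} (he : e ∈ (A i ×ˢ B i).image fun p => s(p.1, p.2)) : e ∈ G.edgeSet := by
  induction e using Sym2.ind with
  | _ x y =>
    rcases mk_mem_image_product_iff.1 he with ⟨hx, hy⟩ | ⟨hy, hx⟩
    · exact h.2.1 i x hx y hy
    · exact (h.2.1 i y hy x hx).symm

theorem of_adj_iff {A₀ B₀ : Finset V}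
    (hadj : ∀ u v, G.Adj u v ↔ (u ∈ A₀ ∧ v ∈ B₀) ∨ (u ∈ B₀ ∧ v ∈ A₀)) :
    IsBipDecomp G (fun _ : Fin 1 => A₀) (fun _ => B₀) := by
  refine ⟨fun _ => disjoint_left.2 fun x hA hB => G.irrefl ((hadj x x).2 (.inl ⟨hA, hB⟩)),
    fun _ a ha b hb => (hadj a b).2 (.inl ⟨ha, hb⟩), fun e he => ?_⟩
  induction e using Sym2.ind with
  | _ u v =>
    refine ⟨0, mk_mem_image_product_iff.2 ?_, fun i _ => Subsingleton.elim i 0⟩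
    rcases (hadj u v).1 he with h | h <;> tauto

theorem append (hHG : H ≤ G) {m n : ℕ} {A B : Fin m → Finset V} {A' B' : Fin n → Finset V}
    (h : IsBipDecomp H A B) (h' : IsBipDecomp (G \ H) A' B') :
    IsBipDecomp G (Fin.append A A') (Fin.append B B') := by
  refine ⟨?_, ?_, fun e he => ?_⟩
  · rw [Fin.forall_fin_add]
    simpa using ⟨h.1, h'.1⟩
  · rw [Fin.forall_fin_add]
    simp only [Fin.append_left, Fin.append_right]
    exact ⟨fun i a ha b hb => hHG (h.2.1 i a ha b hb),
      fun i a ha b hb => (h'.2.1 i a ha b hb).1⟩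
  by_cases heH : e ∈ H.edgeSet
  · obtain ⟨i, hi, huniq⟩ := h.2.2 e heH
    refine ⟨Fin.castAdd n i, by simpa using hi, ?_⟩
    rw [Fin.forall_fin_add]
    simp only [Fin.append_left, Fin.append_right]
    refine ⟨fun j hj => by rw [huniq j hj], fun j hj => ?_⟩
    exact absurd (h'.mem_edgeSet hj) (by simp [SimpleGraph.edgeSet_sdiff, heH])
  · have he' : e ∈ (G \ H).edgeSet := by
      rw [SimpleGraph.edgeSet_sdiff]
      exact ⟨he, heH⟩
    obtain ⟨i, hi, huniq⟩ := h'.2.2 e he'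
    refine ⟨Fin.natAdd m i, by simpa using hi, ?_⟩
    rw [Fin.forall_fin_add]
    simp only [Fin.append_left, Fin.append_right]
    exact ⟨fun j hj => absurd (h.mem_edgeSet hj) heH, fun j hj => by rw [huniq j hj]⟩

end IsBipDecomp

variable [Fintype V]

theorem exists_isBipDecomp_of_isVertexCover (G : SimpleGraph V) (T : Finset V)
    (hT : G.IsVertexCover T) :
    ∃ (k : ℕ) (A B : Fin k → Finset V), IsBipDecomp G A B ∧ k ≤ T.card := by
  classical
  induction T using Finset.induction_on generalizing G with
  | empty =>
    refine ⟨0, Fin.elim0, Fin.elim0, ⟨fun i => i.elim0, fun i => i.elim0, fun e he => ?_⟩, le_rfl⟩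
    induction e using Sym2.ind with
    | _ u v => simpa using hT he
  | insert t T ht ih =>
    have hcover : (G.deleteIncidenceSet t).IsVertexCover T := fun u v huv => by
      rw [SimpleGraph.deleteIncidenceSet_adj] at huv
      simpa [huv.2.1, huv.2.2] using hT huv.1
    obtain ⟨k, A, B, hAB, hk⟩ := ih _ hcover
    have hstar : IsBipDecomp (G \ G.deleteIncidenceSet t)
        (fun _ : Fin 1 => {t}) (fun _ => univ.filter (G.Adj t)) :=
      IsBipDecomp.of_adj_iff fun u v => by
        simp only [SimpleGraph.sdiff_deleteIncidenceSet_adj, mem_singleton, mem_filter, mem_univ,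
          true_and]
    refine ⟨k + 1, _, _, hAB.append (G.deleteIncidenceSet_le t) hstar, ?_⟩
    rw [card_insert_of_notMem ht]
    omega

theorem exists_isBipDecomp_of_le_of_isVertexCover {G H : SimpleGraph V} (hHG : H ≤ G) {m : ℕ}
    {A B : Fin m → Finset V} (hAB : IsBipDecomp H A B) (T : Finset V)
    (hT : (G \ H).IsVertexCover T) :
    ∃ (k : ℕ) (A B : Fin k → Finset V), IsBipDecomp G A B ∧ k ≤ m + T.card := by
  obtain ⟨k, A', B', hAB', hk⟩ := exists_isBipDecomp_of_isVertexCover (G \ H) T hT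
  exact ⟨m + k, _, _, hAB.append hHG hAB', by omega⟩

end

theorem stmt3_general {V : Type*} [Fintype V] [DecidableEq V] (G : SimpleGraph V)
    (S A0 B0 : Finset V) (hS : A0 ∪ B0 = S)
    (hind : ∀ u ∈ S, ∀ v ∈ S,
      G.Adj u v ↔ ((u ∈ A0 ∧ v ∈ B0) ∨ (u ∈ B0 ∧ v ∈ A0))) :
    ∃ (k : ℕ) (A B : Fin k → Finset V), IsBipDecomp G A B ∧
      k ≤ Fintype.card V - S.card + 1 := by
  have hA0 : A0 ⊆ S := hS ▸ subset_union_left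
  have hB0 : B0 ⊆ S := hS ▸ subset_union_right
  let H := SimpleGraph.fromRel fun u v => u ∈ A0 ∧ v ∈ B0
  have hH : ∀ u v, H.Adj u v ↔ (u ∈ A0 ∧ v ∈ B0) ∨ (u ∈ B0 ∧ v ∈ A0) := fun u v => by
    simp only [H, SimpleGraph.fromRel_adj, and_iff_right_iff_imp, and_comm (a := v ∈ A0)]
    rintro h rfl
    have hu : u ∈ S := hS ▸ mem_union.2 (h.imp And.left And.left)
    exact G.irrefl ((hind u hu u hu).2 h)
  have hHG : H ≤ G := fun u v huv => by
    rcases (hH u v).1 huv with ⟨hu, hv⟩ | ⟨hu, hv⟩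
    · exact (hind u (hA0 hu) v (hB0 hv)).2 (.inl ⟨hu, hv⟩)
    · exact (hind u (hB0 hu) v (hA0 hv)).2 (.inr ⟨hu, hv⟩)
  have hcover : (G \ H).IsVertexCover ↑Sᶜ := fun u v huv => by
    by_contra! hout
    simp only [coe_compl, Set.mem_compl_iff, mem_coe, not_not] at hout
    exact huv.2 ((hH u v).2 ((hind u hout.1 v hout.2).1 huv.1))
  obtain ⟨k, A, B, hAB, hk⟩ :=
    exists_isBipDecomp_of_le_of_isVertexCover hHG (IsBipDecomp.of_adj_iff hH) Sᶜ hcover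
  refine ⟨k, A, B, hAB, ?_⟩
  rw [card_compl] at hk
  omega

/-- If `S` induces a complete bipartite subgraph of `G` (with parts `A0`, `B0`),
then `τ(G) ≤ n - |S| + 1`: there is a bipartite decomposition of `G` with at most
`n - |S| + 1` parts.  Since `β(G)` is the maximum size of such an `S`, this gives
`τ(G) ≤ n - β(G) + 1`. -/
theorem stmt3 {V : Type*} [Fintype V] [DecidableEq V] (G : SimpleGraph V)
    (S A0 B0 : Finset V) (hdisj : Disjoint A0 B0) (hS : A0 ∪ B0 = S)
    (hind : ∀ u ∈ S, ∀ v ∈ S,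
      G.Adj u v ↔ ((u ∈ A0 ∧ v ∈ B0) ∨ (u ∈ B0 ∧ v ∈ A0))) :
    ∃ (k : ℕ) (A B : Fin k → Finset V), IsBipDecomp G A B ∧
      k ≤ Fintype.card V - S.card + 1 :=
  stmt3_general G S A0 B0 hS hind
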